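/- arXiv:2510.16941 — 3 statements merged into one kernel-verified Lean document; each statement's English description precedes it below -/
import Mathlib

section
/- Let R be a finitely generated ℤ-algebra and let a, b ∈ R. If a ≡ b (mod I) for every ideal I of R of finite index (i.e., R/I is finite), then a = b. -/
/-!
A finitely generated ℤ-algebra `R` is Noetherian. If `x = a - b ≠ 0`, take a maximal ideal `m`
containing the annihilator of `x`. By Krull's intersection theorem an element of `⋂ mᵏ` is fixed
by some `r ∈ m`, i.e. killed by `1 - r ∉ m`; hence `x ∉ mᵏ` for some `k`. The residue field `R ⧸ m`
is finitely generated over the Jacobson ring `ℤ`, so it is a finite `ℤ`-module (Zariski's lemma),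
which forces positive characteristic and finiteness; then `R ⧸ mᵏ` is finite as well.
-/

theorem Int.isJacobsonRing : IsJacobsonRing ℤ := by
  rw [isJacobsonRing_iff_prime_eq]
  intro P hP
  by_cases hP0 : P = ⊥
  · subst hP0
    refine le_antisymm (fun x hx => ?_) Ideal.le_jacobson
    have h1 := Ideal.mem_jacobson_bot.mp hx 1
    have h2 := Ideal.mem_jacobson_bot.mp hx (-1)
    rw [Int.isUnit_iff] at h1 h2
    simpa using by omega
  · have := hP.isMaximal hP0
    exact Ideal.jacobson_eq_self_of_isMaximal

theorem finite_of_field_of_finiteType_int (F : Type*) [Field F] [Algebra ℤ F]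
    [Algebra.FiniteType ℤ F] : Finite F := by
  -- Align the given `ℤ`-module structure with `AddCommGroup.toIntModule`.
  obtain rfl : ‹Algebra ℤ F› = Ring.toIntAlgebra F := Subsingleton.elim _ _
  have := Int.isJacobsonRing
  have : Module.Finite ℤ F := finite_of_finite_type_of_isJacobsonRing ℤ F
  have hchar : ringChar F ≠ 0 := by
    intro h0
    have : CharP F 0 := h0 ▸ ringChar.charP F
    have := CharP.charP_to_charZero F
    exact Int.not_isField <|
      isField_of_isIntegral_of_isField (algebraMap ℤ F).injective_int (Field.toIsField F)
  have : AddGroup.FG F := Module.Finite.iff_addGroup_fg.mp inferInstance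
  refine AddCommGroup.finite_of_fg_isAddTorsion F fun x => ?_
  exact isOfFinAddOrder_iff_nsmul_eq_zero.mpr
    ⟨ringChar F, Nat.pos_of_ne_zero hchar, by simp [nsmul_eq_mul]⟩

theorem Ideal.exists_isMaximal_notMem_pow {R : Type*} [CommRing R] [IsNoetherianRing R] {x : R}
    (hx : x ≠ 0) : ∃ m : Ideal R, m.IsMaximal ∧ ∃ k : ℕ, x ∉ m ^ k := by
  obtain ⟨m, hm, hann⟩ := Ideal.exists_le_maximal (Ideal.torsionOf R R x)
    (mt (Ideal.torsionOf_eq_top_iff R x).mp hx)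
  refine ⟨m, hm, ?_⟩
  by_contra! hxm
  obtain ⟨⟨r, hr⟩, hrx⟩ := (m.mem_iInf_smul_pow_eq_bot_iff x).mp <| by
    simpa [Submodule.mem_iInf, smul_eq_mul] using hxm
  have : 1 - r ∈ m := hann <| by
    rw [Ideal.mem_torsionOf_iff, sub_smul, one_smul, hrx, sub_self]
  exact hm.ne_top <| m.eq_top_iff_one.mpr <| by simpa using m.add_mem this hr

theorem stmt_0 (R : Type*) [CommRing R] [Algebra ℤ R] [Algebra.FiniteType ℤ R]
    (a b : R) (h : ∀ I : Ideal R, Finite (R ⧸ I) → a - b ∈ I) : a = b := by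
  have := Algebra.FiniteType.isNoetherianRing ℤ R
  by_contra hne
  obtain ⟨m, hm, k, hk⟩ := Ideal.exists_isMaximal_notMem_pow (sub_ne_zero.mpr hne)
  let := Ideal.Quotient.field m
  have : Finite (R ⧸ m) := finite_of_field_of_finiteType_int (R ⧸ m)
  exact hk (h _ (m.finite_quotient_pow (IsNoetherian.noetherian m) k))
end

section
/- Let R be a commutative ring that is a finitely generated ℤ-algebra and also a field. Then R is finite. -/
theorem stmt_2 (R : Type*) [CommRing R] [Algebra ℤ R] [Algebra.FiniteType ℤ R]
    (hR : IsField R) : Finite R := by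
  letI : Field R := hR.toField
  haveI hJ : IsJacobsonRing ℤ := by
    rw [isJacobsonRing_iff_prime_eq]
    intro P hP
    by_cases hbot : P = ⊥
    · subst hbot
      refine le_antisymm ?_ Ideal.le_jacobson
      intro x hx
      rw [Ideal.mem_jacobson_bot] at hx
      have h1 := hx 1
      have h2 := hx (-1)
      rw [Int.isUnit_iff] at h1 h2
      simp only [Ideal.mem_bot]
      omega
    · exact Ideal.jacobson_eq_self_of_isMaximal (H := (haveI := hP; IsPrime.to_maximal_ideal hbot))
  have hmod : (Algebra.toModule : Module ℤ R) = AddCommGroup.toIntModule R := by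
    letI := AddCommGroup.uniqueIntModule (M := R)
    exact Subsingleton.elim _ _
  have hfin : Module.Finite ℤ R :=
    hmod ▸ finite_of_finite_type_of_isJacobsonRing ℤ R
  have hint : Algebra.IsIntegral ℤ R := by
    haveI := finite_of_finite_type_of_isJacobsonRing ℤ R
    exact Algebra.IsIntegral.of_finite ℤ R
  by_cases hc : CharZero R
  · exfalso
    obtain ⟨p, pmonic, hp⟩ := hint.isIntegral (((1/2 : ℚ) : R))
    have h0 : Polynomial.eval₂ (algebraMap ℤ ℚ) (1/2 : ℚ) p = 0 := by
      apply (Rat.castHom R).injective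
      rw [map_zero, Polynomial.hom_eval₂,
        Subsingleton.elim ((Rat.castHom R).comp (algebraMap ℤ ℚ)) (algebraMap ℤ R)]
      simpa using hp
    have h12 : IsIntegral ℤ ((1/2 : ℚ)) := ⟨p, pmonic, h0⟩
    obtain ⟨y, hy⟩ := IsIntegrallyClosed.isIntegral_iff.mp h12
    have hy' : (y : ℚ) = 1/2 := by exact_mod_cast hy
    have : (y * 2 : ℤ) = 1 := by
      have := hy'
      field_simp at this
      exact_mod_cast this
    omega
  · have hp : ringChar R ≠ 0 := fun h =>
      hc ((CharP.charP_zero_iff_charZero R).mp (h ▸ ringChar.charP R))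
    have htor : Module.IsTorsion ℤ R := by
      intro x
      refine ⟨⟨(ringChar R : ℤ), ?_⟩, ?_⟩
      · simp [mem_nonZeroDivisors_iff_ne_zero, hp]
      · have : ((ringChar R : ℤ) : R) = 0 := by
          exact_mod_cast CharP.cast_eq_zero R (ringChar R)
        simp only [Submonoid.smul_def, zsmul_eq_mul, this, zero_mul]
    exact Module.finite_of_fg_torsion R htor
end

section
/- Let R be a Noetherian commutative ring, I an ideal of R, M a finitely generated R-module, and N a submodule of M. Then there exists c ∈ ℕ such that for all n ∈ ℕ, I^{n+c}·M ∩ N = I^n·(I^c·M ∩ N). -/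
theorem stmt_7 (R : Type*) [CommRing R] [IsNoetherianRing R] (I : Ideal R)
    (M : Type*) [AddCommGroup M] [Module R M] [Module.Finite R M]
    (N : Submodule R M) :
    ∃ c : ℕ, ∀ n : ℕ,
      (I ^ (n + c) • ⊤ : Submodule R M) ⊓ N = I ^ n • ((I ^ c • ⊤ : Submodule R M) ⊓ N) := by
  obtain ⟨m, f, hf⟩ := Module.Finite.exists_fin' R M
  obtain ⟨c, hc⟩ := I.exists_pow_inf_eq_pow_smul (N.comap f)
  refine ⟨c, fun n => ?_⟩
  have h := hc (n + c) (by omega)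
  simp only [Nat.add_sub_cancel] at h
  have key : ∀ (A : Submodule R (Fin m → R)),
      Submodule.map f (A ⊓ N.comap f) = Submodule.map f A ⊓ N := by
    intro A
    apply le_antisymm
    · exact le_inf (Submodule.map_mono inf_le_left)
        ((Submodule.map_mono inf_le_right).trans (Submodule.map_comap_le f N))
    · rintro x ⟨⟨y, hy, rfl⟩, hx⟩
      exact ⟨y, ⟨hy, hx⟩, rfl⟩
  have hmap : ∀ k : ℕ, Submodule.map f (I ^ k • ⊤ : Submodule R (Fin m → R))
      = (I ^ k • ⊤ : Submodule R M) := by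
    intro k
    rw [Submodule.map_smul'', Submodule.map_top, LinearMap.range_eq_top.mpr hf]
  calc (I ^ (n + c) • ⊤ : Submodule R M) ⊓ N
      = Submodule.map f ((I ^ (n + c) • ⊤) ⊓ N.comap f) := by rw [key, hmap]
    _ = Submodule.map f (I ^ n • ((I ^ c • ⊤) ⊓ N.comap f)) := by rw [h]
    _ = I ^ n • ((I ^ c • ⊤ : Submodule R M) ⊓ N) := by
        rw [Submodule.map_smul'', key, hmap]
end
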